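/- arXiv:1205.0045 — 3 statements merged into one kernel-verified Lean document; each statement's English description precedes it below -/
import Mathlib

section
/- Let k ∈ ℤ, let f : ℍ → ℂ be holomorphic, and let g = [[a,b],[c,d]] ∈ SL(2,ℝ). Define the weight-k slash (f|_k g)(z) = (c·z+d)^{−k}·f(gz), where gz = (a·z+b)/(c·z+d). Then the Shimura–Maass derivative of weight k intertwines with the slash action, raising the weight by 2: for every z ∈ ℍ, (1/(2πi))·[ (f|_k g)'(z) + k·(f|_k g)(z)/(z − conj(z)) ] = (c·z+d)^{−(k+2)} · (1/(2πi))·[ f'(gz) + k·f(gz)/(gz − conj(gz)) ]; that is, ∂_k(f|_k g) = (∂_k f)|_{k+2} g. -/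
/-!
Write `j = c z + d` and `w = g z`. The product and chain rules, with `w' = 1 / j²`, give
`(f|_k g)'(z) = j^{-(k+2)} (f'(w) - k c j f(w))`, while `w - w̄ = (z - z̄) / (j j̄)`. Since
`j̄ = j - c (z - z̄)`, the extra term `-k c j f(w)` is exactly what turns `k j² f(w) / (z - z̄)`
into `k j j̄ f(w) / (z - z̄) = k f(w) / (w - w̄)`.
-/

open Complex ComplexConjugate

section Moebius

variable {a b c d : ℝ} {z : ℂ}

theorem ofReal_mul_add_ofReal_ne_zero (hcd : c ≠ 0 ∨ d ≠ 0) (hz : z.im ≠ 0) :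
    (c : ℂ) * z + d ≠ 0 := by
  intro h
  have hc : c = 0 := (mul_eq_zero.1 (by simpa using congrArg im h)).resolve_right hz
  have hd : d = 0 := by simpa [hc] using congrArg re h
  exact hcd.elim (· hc) (· hd)

theorem im_moebius (z : ℂ) :
    (((a : ℂ) * z + b) / ((c : ℂ) * z + d)).im =
      (a * d - b * c) * z.im / normSq ((c : ℂ) * z + d) := by
  rw [div_im]
  simp only [add_im, add_re, mul_im, mul_re, ofReal_re, ofReal_im]
  ring

theorem moebius_sub_conj (hj : (c : ℂ) * z + d ≠ 0) :
    ((a : ℂ) * z + b) / ((c : ℂ) * z + d) - conj (((a : ℂ) * z + b) / ((c : ℂ) * z + d)) =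
      (a * d - b * c) * (z - conj z) / (((c : ℂ) * z + d) * ((c : ℂ) * conj z + d)) := by
  have hj' : (c : ℂ) * conj z + d ≠ 0 := by simpa using (map_ne_zero (starRingEnd ℂ)).2 hj
  simp only [map_div₀, map_add, map_mul, conj_ofReal]
  rw [div_sub_div _ _ hj hj']
  congr 1
  ring

end Moebius

theorem zpow_neg_eq_zpow_neg_add_two_mul_sq {G₀ : Type*} [GroupWithZero G₀] {x : G₀}
    (hx : x ≠ 0) (k : ℤ) : x ^ (-k) = x ^ (-(k + 2)) * x ^ 2 := by
  rw [← zpow_natCast, ← zpow_add₀ hx]; ring_nf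

theorem hasDerivAt_mul_add (p q z : ℂ) : HasDerivAt (fun ζ => p * ζ + q) p z := by
  simpa using ((hasDerivAt_id z).const_mul p).add_const q

theorem hasDerivAt_moebius {a b c d z : ℂ} (hj : c * z + d ≠ 0) :
    HasDerivAt (fun ζ => (a * ζ + b) / (c * ζ + d)) ((a * d - b * c) / (c * z + d) ^ 2) z :=
  ((hasDerivAt_mul_add a b z).div (hasDerivAt_mul_add c d z) hj).congr_deriv (by ring)

theorem hasDerivAt_slash {k : ℤ} {f : ℂ → ℂ} {a b c d z : ℂ} (hj : c * z + d ≠ 0)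
    (hf : DifferentiableAt ℂ f ((a * z + b) / (c * z + d))) :
    HasDerivAt (fun ζ => (c * ζ + d) ^ (-k) * f ((a * ζ + b) / (c * ζ + d)))
      ((c * z + d) ^ (-(k + 2)) * ((a * d - b * c) * deriv f ((a * z + b) / (c * z + d)) -
        k * c * (c * z + d) * f ((a * z + b) / (c * z + d)))) z := by
  have hpow := (hasDerivAt_zpow (-k) _ (Or.inl hj)).comp z (hasDerivAt_mul_add c d z)
  refine (hpow.mul (hf.hasDerivAt.comp z (hasDerivAt_moebius hj))).congr_deriv ?_
  have hk1 : (c * z + d) ^ (-k - 1) = (c * z + d) ^ (-(k + 2)) * (c * z + d) := by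
    rw [← zpow_add_one₀ hj]; ring_nf
  simp only [Function.comp_def, hk1, zpow_neg_eq_zpow_neg_add_two_mul_sq hj k]
  push_cast
  field_simp
  ring

theorem shimuraMaass_slash_intertwine (k : ℤ) (f : ℂ → ℂ)
    (hf : ∀ z : ℂ, 0 < z.im → DifferentiableAt ℂ f z)
    (a b c d : ℝ) (hdet : a * d - b * c = 1)
    (z : ℂ) (hz : 0 < z.im) :
    (1 / (2 * (Real.pi : ℂ) * Complex.I)) *
        (deriv (fun ζ : ℂ => ((c : ℂ) * ζ + d) ^ (-k) *
            f (((a : ℂ) * ζ + b) / ((c : ℂ) * ζ + d))) z +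
          (k : ℂ) * (((c : ℂ) * z + d) ^ (-k) *
            f (((a : ℂ) * z + b) / ((c : ℂ) * z + d))) / (z - (starRingEnd ℂ) z)) =
      ((c : ℂ) * z + d) ^ (-(k + 2)) *
        ((1 / (2 * (Real.pi : ℂ) * Complex.I)) *
          (deriv f (((a : ℂ) * z + b) / ((c : ℂ) * z + d)) +
            (k : ℂ) * f (((a : ℂ) * z + b) / ((c : ℂ) * z + d)) /
              ((((a : ℂ) * z + b) / ((c : ℂ) * z + d)) -
                (starRingEnd ℂ) (((a : ℂ) * z + b) / ((c : ℂ) * z + d))))) := by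
  have hdetC : (a : ℂ) * d - b * c = 1 := by exact_mod_cast hdet
  have hcd : c ≠ 0 ∨ d ≠ 0 := by
    by_contra! h
    simp [h.1, h.2] at hdet
  have hj := ofReal_mul_add_ofReal_ne_zero hcd hz.ne'
  have hw : 0 < (((a : ℂ) * z + b) / ((c : ℂ) * z + d)).im := by
    rw [im_moebius, hdet, one_mul]
    exact div_pos hz (normSq_pos.2 hj)
  have hS : z - conj z ≠ 0 := by simp [sub_conj, hz.ne', I_ne_zero]
  rw [(hasDerivAt_slash hj (hf _ hw)).deriv, moebius_sub_conj hj, hdetC,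
    zpow_neg_eq_zpow_neg_add_two_mul_sq hj k]
  field_simp
  ring
end

section
/- Let k ∈ ℤ and let f : ℍ → ℂ be holomorphic. Define the iterated Shimura–Maass derivatives ∂^n f recursively by ∂^0 f = f and ∂^{n+1} f = (1/(2πi))·(∂_z(∂^n f) + (k+2n)·(∂^n f)/(z − conj(z))), where ∂_z is the Wirtinger derivative. Then for every n ≥ 0 and every z ∈ ℍ, (∂^n f)(z) = Σ_{r=0}^{n} C(n,r) · (k+r)_{n−r} / (−4π·Im z)^{n−r} · f^{(r)}(z)/(2πi)^r. -/
open Complex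

/-- The Wirtinger derivative `∂_z = (1/2)(∂/∂x − i ∂/∂y)` of `f : ℂ → ℂ` at `z`. -/
noncomputable def wirtingerDeriv (f : ℂ → ℂ) (z : ℂ) : ℂ :=
  (1 / 2) * (fderiv ℝ f z 1 - Complex.I * fderiv ℝ f z Complex.I)

/-- The iterated Shimura–Maass derivative `∂^n f` of base weight `k`:
`∂^0 f = f` and `∂^{n+1} f = (1/(2πi)) (∂_z (∂^n f) + (k+2n) (∂^n f)/(z − conj z))`. -/
noncomputable def smIter (k : ℤ) (f : ℂ → ℂ) : ℕ → ℂ → ℂ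
  | 0 => f
  | n + 1 => fun z => (1 / (2 * (Real.pi : ℂ) * Complex.I)) *
      (wirtingerDeriv (smIter k f n) z +
        ((k : ℂ) + 2 * n) * smIter k f n z / (z - (starRingEnd ℂ) z))

/-! Off the real line write `∂^n f = (2πi)⁻ⁿ ∑_r a(n,r) f^{(r)} (z - z̄)^{r-n}`.
Since `∂_z` kills `z̄` and acts as `d/dz` on holomorphic functions, `∂_z (z - z̄)^m = m (z - z̄)^{m-1}`,
so one raising step turns this into the same shape with
`a(n+1,r) = a(n,r-1) + (k+n+r) a(n,r)`. The coefficients `C(n,r) (k+r)_{n-r}` satisfy this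
Pascal-type recursion, and `2πi (z - z̄) = -4π Im z` gives the stated form. -/

open ComplexConjugate Finset

section Wirtinger

variable {f : ℂ → ℂ} {z : ℂ}

theorem HasFDerivAt.wirtingerDeriv_eq {L : ℂ →L[ℝ] ℂ} (h : HasFDerivAt f L z) :
    wirtingerDeriv f z = (1 / 2) * (L 1 - I * L I) := by
  rw [wirtingerDeriv, h.fderiv]

theorem wirtingerDeriv_congr {g : ℂ → ℂ} (h : f =ᶠ[nhds z] g) :
    wirtingerDeriv f z = wirtingerDeriv g z := by
  rw [wirtingerDeriv, wirtingerDeriv, h.fderiv_eq]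

theorem wirtingerDeriv_const_mul (c : ℂ) :
    wirtingerDeriv (fun w => c * f w) z = c * wirtingerDeriv f z := by
  simp only [wirtingerDeriv, show (fun w => c * f w) = c • f from rfl, fderiv_const_smul_field,
    Pi.smul_apply, FunLike.coe_smul, smul_eq_mul]
  ring

theorem wirtingerDeriv_sum {ι : Type*} (s : Finset ι) {F : ι → ℂ → ℂ}
    (hF : ∀ i ∈ s, DifferentiableAt ℝ (F i) z) :
    wirtingerDeriv (fun w => ∑ i ∈ s, F i w) z = ∑ i ∈ s, wirtingerDeriv (F i) z := by
  simp only [wirtingerDeriv, fderiv_fun_sum hF, FunLike.coe_sum, Finset.sum_apply, mul_sum,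
    ← sum_sub_distrib]

theorem wirtingerDeriv_mul {g : ℂ → ℂ} (hf : DifferentiableAt ℝ f z)
    (hg : DifferentiableAt ℝ g z) :
    wirtingerDeriv (fun w => f w * g w) z = wirtingerDeriv f z * g z + f z * wirtingerDeriv g z := by
  simp only [wirtingerDeriv, fderiv_fun_mul hf hg, FunLike.coe_add, Pi.add_apply,
    FunLike.coe_smul, Pi.smul_apply, smul_eq_mul]
  ring

theorem DifferentiableAt.wirtingerDeriv_eq_deriv (hf : DifferentiableAt ℂ f z) :
    wirtingerDeriv f z = deriv f z := by
  rw [(hf.hasDerivAt.hasFDerivAt.restrictScalars ℝ).wirtingerDeriv_eq]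
  simp only [ContinuousLinearMap.coe_restrictScalars', ContinuousLinearMap.toSpanSingleton_apply,
    smul_eq_mul]
  linear_combination (-1 / 2 * deriv f z) * I_sq

theorem hasFDerivAt_sub_conj (z : ℂ) :
    HasFDerivAt (fun w : ℂ => w - conj w)
      (ContinuousLinearMap.id ℝ ℂ - conjCLE.toContinuousLinearMap) z :=
  (hasFDerivAt_id z).sub conjCLE.hasFDerivAt

theorem wirtingerDeriv_comp_sub_conj {h : ℂ → ℂ} (hh : DifferentiableAt ℂ h (z - conj z)) :
    wirtingerDeriv (fun w => h (w - conj w)) z = deriv h (z - conj z) := by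
  have hcomp : HasFDerivAt (fun w => h (w - conj w)) _ z :=
    (hh.hasDerivAt.hasFDerivAt.restrictScalars ℝ).comp z (hasFDerivAt_sub_conj z)
  rw [hcomp.wirtingerDeriv_eq]
  simp only [ContinuousLinearMap.comp_sub, ContinuousLinearMap.comp_id, sub_apply,
    ContinuousLinearMap.coe_restrictScalars', ContinuousLinearMap.toSpanSingleton_apply,
    smul_eq_mul, ContinuousLinearMap.comp_apply, ContinuousLinearEquiv.coe_coe,
    ContinuousAlgEquiv.coeCLE_apply, conjCAE_apply, map_one, sub_self, conj_I]
  linear_combination (-deriv h (z - conj z)) * I_sq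

theorem differentiableAt_sub_conj_zpow (hz : z - conj z ≠ 0) (m : ℤ) :
    DifferentiableAt ℝ (fun w => (w - conj w) ^ m) z :=
  DifferentiableAt.comp (g := fun w : ℂ => w ^ m) z
    ((differentiableAt_zpow.mpr (Or.inl hz)).restrictScalars ℝ)
    (hasFDerivAt_sub_conj z).differentiableAt

theorem wirtingerDeriv_mul_sub_conj_zpow {g : ℂ → ℂ} (hg : DifferentiableAt ℂ g z)
    (hz : z - conj z ≠ 0) (m : ℤ) :
    wirtingerDeriv (fun w => g w * (w - conj w) ^ m) z =
      deriv g z * (z - conj z) ^ m + g z * (m * (z - conj z) ^ (m - 1)) := by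
  rw [wirtingerDeriv_mul (hg.restrictScalars ℝ) (differentiableAt_sub_conj_zpow hz m),
    hg.wirtingerDeriv_eq_deriv,
    wirtingerDeriv_comp_sub_conj (differentiableAt_zpow.mpr (Or.inl hz)), deriv_zpow]

end Wirtinger

section Coefficients

noncomputable def smCoeff (k : ℂ) (n r : ℕ) : ℂ :=
  n.choose r * (ascPochhammer ℂ (n - r)).eval (k + r)

variable (k : ℂ) (n : ℕ)

theorem smCoeff_of_lt {r : ℕ} (h : n < r) : smCoeff k n r = 0 := by
  simp [smCoeff, Nat.choose_eq_zero_of_lt h]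

theorem smCoeff_succ_zero : smCoeff k (n + 1) 0 = smCoeff k n 0 * (k + n) := by
  simp [smCoeff, ascPochhammer_succ_eval]

theorem smCoeff_succ_succ (r : ℕ) :
    smCoeff k (n + 1) (r + 1) = smCoeff k n r + smCoeff k n (r + 1) * (k + n + (r + 1)) := by
  rcases lt_or_ge r n with hrn | hnr
  · obtain ⟨m, rfl⟩ : ∃ m, n = r + 1 + m := ⟨n - (r + 1), by omega⟩
    have hpascal : ((r + 1 + m + 1).choose (r + 1) : ℂ) =
        (r + 1 + m).choose r + (r + 1 + m).choose (r + 1) := by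
      exact_mod_cast Nat.choose_succ_succ' (r + 1 + m) r
    have hratio : ((r + 1 + m).choose r : ℂ) * (m + 1) = (r + 1 + m).choose (r + 1) * (r + 1) := by
      have := Nat.choose_succ_right_eq (r + 1 + m) r
      rw [show r + 1 + m - r = m + 1 by omega] at this
      exact_mod_cast this.symm
    have hpoch_left : (ascPochhammer ℂ (m + 1)).eval (k + r) =
        (k + r) * (ascPochhammer ℂ m).eval (k + (r + 1 : ℕ)) := by
      rw [ascPochhammer_succ_left]
      simp [Polynomial.eval_comp, add_assoc]
    simp only [smCoeff, show r + 1 + m + 1 - (r + 1) = m + 1 by omega,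
      show r + 1 + m - r = m + 1 by omega, show r + 1 + m - (r + 1) = m by omega,
      ascPochhammer_succ_eval, hpoch_left, hpascal]
    push_cast
    linear_combination (ascPochhammer ℂ m).eval (k + (r + 1)) * hratio
  · rcases hnr.eq_or_lt with rfl | hnr
    · simp [smCoeff]
    · simp [smCoeff_of_lt, hnr, hnr.trans (Nat.lt_succ_self r)]

theorem sum_range_smCoeff_succ (F : ℕ → ℂ) :
    ∑ r ∈ range (n + 2), smCoeff k (n + 1) r * F r =
      ∑ r ∈ range (n + 1), smCoeff k n r * (F (r + 1) + (k + n + r) * F r) := by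
  have hlast : ∑ r ∈ range (n + 1), smCoeff k n r * ((k + n + r) * F r) =
      ∑ r ∈ range (n + 2), smCoeff k n r * ((k + n + r) * F r) := by
    rw [sum_range_succ _ (n + 1), smCoeff_of_lt k n (Nat.lt_succ_self n), zero_mul, add_zero]
  rw [sum_congr rfl fun r _ => mul_add _ _ _, sum_add_distrib, hlast, sum_range_succ',
    sum_range_succ' (fun r => smCoeff k n r * ((k + n + r) * F r))]
  simp only [smCoeff_succ_succ, smCoeff_succ_zero, add_mul, sum_add_distrib, mul_assoc,
    Nat.cast_add, Nat.cast_one, Nat.cast_zero, add_zero]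
  ring

end Coefficients

/-- `(2πi)ⁿ ∂^n f`, in the form in which the raising operator acts on it termwise. -/
noncomputable def smSum (k : ℂ) (f : ℂ → ℂ) (n : ℕ) (w : ℂ) : ℂ :=
  ∑ r ∈ range (n + 1), smCoeff k n r * (iteratedDeriv r f w * (w - conj w) ^ ((r : ℤ) - n))

theorem smSum_succ (k : ℂ) {f : ℂ → ℂ} (n : ℕ) {z : ℂ}
    (hf : ∀ r, DifferentiableAt ℂ (iteratedDeriv r f) z) (hz : z - conj z ≠ 0) :
    smSum k f (n + 1) z =
      wirtingerDeriv (smSum k f n) z + (k + 2 * n) * smSum k f n z / (z - conj z) := by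
  have hdiff : ∀ r ∈ range (n + 1), DifferentiableAt ℝ
      (fun w => smCoeff k n r * (iteratedDeriv r f w * (w - conj w) ^ ((r : ℤ) - n))) z :=
    fun r _ => (((hf r).restrictScalars ℝ).mul (differentiableAt_sub_conj_zpow hz _)).const_mul _
  unfold smSum
  rw [wirtingerDeriv_sum _ hdiff, sum_range_smCoeff_succ, mul_sum, sum_div, ← sum_add_distrib]
  refine sum_congr rfl fun r _ => ?_
  rw [wirtingerDeriv_const_mul, wirtingerDeriv_mul_sub_conj_zpow (hf r) hz, ← iteratedDeriv_succ,
    show ((r + 1 : ℕ) : ℤ) - (n + 1 : ℕ) = r - n by push_cast; ring,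
    show (r : ℤ) - (n + 1 : ℕ) = r - n - 1 by push_cast; ring, zpow_sub_one₀ hz]
  push_cast
  ring

theorem sub_conj_ne_zero {z : ℂ} (hz : z.im ≠ 0) : z - conj z ≠ 0 := by
  simpa [sub_conj, I_ne_zero] using hz

theorem smIter_eqOn_smSum (k : ℤ) {f : ℂ → ℂ} {U : Set ℂ} (hU : IsOpen U)
    (hUim : ∀ z ∈ U, z.im ≠ 0) (hf : DifferentiableOn ℂ f U) (n : ℕ) :
    Set.EqOn (smIter k f n) (fun w => ((2 * (Real.pi : ℂ) * I) ^ n)⁻¹ * smSum k f n w) U := by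
  have hD : ∀ r, ∀ z ∈ U, DifferentiableAt ℂ (iteratedDeriv r f) z := fun r z hz => by
    rw [iteratedDeriv_eq_iterate]
    exact ((hf.analyticOnNhd hU).iterated_deriv r z hz).differentiableAt
  induction n with
  | zero => intro z _; simp [smIter, smSum, smCoeff]
  | succ n ih =>
    intro z hz
    have hcongr := ih.eventuallyEq_of_mem (hU.mem_nhds hz)
    simp only [smIter]
    rw [wirtingerDeriv_congr hcongr, wirtingerDeriv_const_mul, ih hz,
      smSum_succ _ n (fun r => hD r z hz) (sub_conj_ne_zero (hUim z hz))]
    field_simp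
    ring

theorem two_pi_I_mul_sub_conj (z : ℂ) :
    2 * (Real.pi : ℂ) * I * (z - conj z) = -4 * (Real.pi : ℂ) * (z.im : ℂ) := by
  rw [sub_conj]
  push_cast
  linear_combination (4 * (Real.pi : ℂ) * (z.im : ℂ)) * I_sq

theorem smIter_eq_sum_iteratedDeriv (k : ℤ) (f : ℂ → ℂ)
    (hf : ∀ z : ℂ, 0 < z.im → DifferentiableAt ℂ f z)
    (n : ℕ) (z : ℂ) (hz : 0 < z.im) :
    smIter k f n z =
      ∑ r ∈ Finset.range (n + 1),
        (n.choose r : ℂ) *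
          ((ascPochhammer ℂ (n - r)).eval ((k : ℂ) + r) /
            (-4 * (Real.pi : ℂ) * (z.im : ℂ)) ^ (n - r)) *
          (iteratedDeriv r f z / (2 * (Real.pi : ℂ) * Complex.I) ^ r) := by
  rw [smIter_eqOn_smSum k (isOpen_lt continuous_const continuous_im) (fun w hw => hw.ne')
    (fun w hw => (hf w hw).differentiableWithinAt) n hz]
  simp only [smSum, mul_sum]
  refine sum_congr rfl fun r hr => ?_
  have hrn : r ≤ n := Nat.lt_succ_iff.mp (mem_range.mp hr)
  rw [← two_pi_I_mul_sub_conj, show (r : ℤ) - n = -((n - r : ℕ) : ℤ) by omega, zpow_neg,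
    zpow_natCast, ← pow_sub_mul_pow _ hrn]
  simp only [smCoeff, div_eq_mul_inv, mul_inv, mul_pow]
  ring
end

section
/- For all integers 0 ≤ m ≤ n and every real number k, Σ_{r=m}^{n} (−1)^{n−r} · C(n,r) · C(r,m) · (k+r)_{n−r} · (k+m)_{r−m} equals 1 if n = m and equals 0 if n > m. (This expresses that the two triangular transition matrices between ordinary derivatives D^n f and Shimura–Maass derivatives ∂^n f are mutually inverse.) -/
/-!
Substituting `r = m + j` with `n = m + N`, the identities
`C(n, r) C(r, m) = C(n, m) C(N, j)` and `(k+m)_j (k+m+j)_{N-j} = (k+m)_N`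
make every term equal to `C(n, m) (k+m)_N` times `(-1)^(N-j) C(N, j)`, and the latter
sum to `(1 - 1)^N`.
-/

open Finset Polynomial

variable {R : Type*} [CommRing R]

theorem ascPochhammer_eval_mul_eval_add (x : R) (a b : ℕ) :
    (ascPochhammer R a).eval x * (ascPochhammer R b).eval (x + a) =
      (ascPochhammer R (a + b)).eval x := by
  simpa only [eval_mul, eval_comp, eval_add, eval_X, eval_natCast] using
    congrArg (eval x) (ascPochhammer_mul (S := R) a b)

theorem sum_range_neg_one_pow_sub_mul_choose (N : ℕ) :
    ∑ j ∈ range (N + 1), (-1 : R) ^ (N - j) * (N.choose j : R) = if N = 0 then 1 else 0 := by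
  simpa [add_neg_cancel, zero_pow_eq] using (add_pow (1 : R) (-1) N).symm

theorem transition_term_eq (k : R) (m N j : ℕ) (hj : j ≤ N) :
    (-1 : R) ^ (m + N - (m + j)) * ((m + N).choose (m + j) : R) * ((m + j).choose m : R) *
        (ascPochhammer R (m + N - (m + j))).eval (k + ↑(m + j)) *
        (ascPochhammer R (m + j - m)).eval (k + m) =
      ((m + N).choose m : R) * (ascPochhammer R N).eval (k + m) *
        ((-1 : R) ^ (N - j) * (N.choose j : R)) := by
  have hchoose : ((m + N).choose (m + j) : R) * ((m + j).choose m : R) =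
      ((m + N).choose m : R) * (N.choose j : R) := by
    have := Nat.choose_mul (n := m + N) (Nat.le_add_right m j)
    rw [Nat.add_sub_cancel_left, Nat.add_sub_cancel_left] at this
    exact_mod_cast congrArg (Nat.cast : ℕ → R) this
  have hpoch := ascPochhammer_eval_mul_eval_add (k + m) j (N - j)
  rw [Nat.add_sub_cancel' hj] at hpoch
  rw [Nat.add_sub_add_left, Nat.add_sub_cancel_left, Nat.cast_add, ← add_assoc, ← hpoch]
  linear_combination (-1 : R) ^ (N - j) * (ascPochhammer R (N - j)).eval (k + m + j) *
    (ascPochhammer R j).eval (k + m) * hchoose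

theorem sum_Icc_transition (k : R) (m N : ℕ) :
    ∑ r ∈ Icc m (m + N),
        (-1 : R) ^ (m + N - r) * ((m + N).choose r : R) * (r.choose m : R) *
          (ascPochhammer R (m + N - r)).eval (k + r) *
          (ascPochhammer R (r - m)).eval (k + m) =
      if N = 0 then 1 else 0 := by
  rw [← Ico_add_one_right_eq_Icc, sum_Ico_eq_sum_range, show m + N + 1 - m = N + 1 by omega,
    sum_congr rfl fun j hj => transition_term_eq k m N j (Nat.lt_succ_iff.mp (mem_range.mp hj)),
    ← mul_sum, sum_range_neg_one_pow_sub_mul_choose]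
  split_ifs with hN <;> simp [hN]

theorem transition_matrices_inverse (k : ℝ) (m n : ℕ) (hmn : m ≤ n) :
    ∑ r ∈ Finset.Icc m n,
        (-1 : ℝ) ^ (n - r) * (n.choose r : ℝ) * (r.choose m : ℝ) *
          (ascPochhammer ℝ (n - r)).eval (k + r) *
          (ascPochhammer ℝ (r - m)).eval (k + m) =
      if n = m then 1 else 0 := by
  obtain ⟨N, rfl⟩ := Nat.exists_eq_add_of_le hmn
  simpa only [Nat.add_eq_left] using sum_Icc_transition k m N
end
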